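/- Let Y = D ∪ L ⊆ ℝ², where D = {(x,y) ∈ ℝ² : 9|y| ≤ 1/4 − |x|} and L = ([−π/2, −1/4] ∪ [1/4, π/2]) × {0}, equipped with the ℓ∞-distance d∞. Then (Y, d∞) is a compact geodesic metric space: Y is compact, and for any two points p, q ∈ Y there exists a map γ : [0,1] → Y with γ(0) = p, γ(1) = q, and d∞(γ(s),γ(t)) = |s−t|·d∞(p,q) for all s, t ∈ [0,1]. -/
import Mathlib


/- `(Y, d∞)` is a compact geodesic metric space: `Y = D ∪ L` is a compact subset of
`ℝ × ℝ` (which carries the ℓ∞-distance as its product metric), and any two points of `Y`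
are joined by a constant-speed geodesic in `Y`. -/

open Set Real

noncomputable section

/-- The set `D = {(x,y) : 9|y| ≤ 1/4 - |x|}`. -/
def setD : Set (ℝ × ℝ) := {p | 9 * |p.2| ≤ 1 / 4 - |p.1|}

/-- The set `L = ([-π/2,-1/4] ∪ [1/4,π/2]) × {0}`. -/
def lineLY : Set (ℝ × ℝ) :=
  (Set.Icc (-(π / 2)) (-(1 / 4 : ℝ)) ∪ Set.Icc (1 / 4 : ℝ) (π / 2)) ×ˢ ({0} : Set ℝ)

/-- The space `Y = D ∪ L`. -/
def spaceY : Set (ℝ × ℝ) := setD ∪ lineLY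

/-- Half-width of the rhombus `D` at abscissa `x`. -/
noncomputable def aY (x : ℝ) : ℝ := max 0 ((1 / 4 - |x|) / 9)

lemma aY_nonneg (x : ℝ) : 0 ≤ aY x := le_max_left _ _

lemma aY_lip (x x' : ℝ) : |aY x - aY x'| ≤ |x - x'| := by
  have h1 : |aY x - aY x'| ≤ max |(0 : ℝ) - 0| |(1 / 4 - |x|) / 9 - (1 / 4 - |x'|) / 9| :=
    abs_max_sub_max_le_max _ _ _ _
  have h2 : |(1 / 4 - |x|) / 9 - (1 / 4 - |x'|) / 9| ≤ |x - x'| := by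
    have h3 := abs_abs_sub_abs_le_abs_sub x' x
    have h4 : (1 / 4 - |x|) / 9 - (1 / 4 - |x'|) / 9 = (|x'| - |x|) / 9 := by ring
    rw [h4, abs_div, abs_sub_comm x x']
    have h5 : |(9 : ℝ)| = 9 := by norm_num
    rw [h5]
    linarith [abs_nonneg (x' - x)]
  simp only [sub_zero, abs_zero] at h1
  exact h1.trans (max_le (by positivity) h2)

lemma clamp_abs_le {v a : ℝ} (ha : 0 ≤ a) : |max (-a) (min v a)| ≤ a := by
  rw [abs_le]
  constructor
  · exact le_max_left _ _
  · exact max_le (by linarith) (min_le_right _ _)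

lemma clamp_eq {v a : ℝ} (h : |v| ≤ a) : max (-a) (min v a) = v := by
  rw [abs_le] at h
  rw [min_eq_left h.2, max_eq_right h.1]

lemma lineLY_props {r : ℝ × ℝ} (hr : r ∈ lineLY) :
    (1 / 4 ≤ |r.1| ∧ |r.1| ≤ π / 2) ∧ r.2 = 0 := by
  have hpi : (3 : ℝ) < π := pi_gt_three
  obtain ⟨h1, h2⟩ := hr
  simp only [Set.mem_singleton_iff] at h2
  refine ⟨?_, h2⟩
  rcases h1 with h | h
  · obtain ⟨ha, hb⟩ := h
    rw [abs_of_nonpos (by linarith)]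
    constructor <;> linarith
  · obtain ⟨ha, hb⟩ := h
    rw [abs_of_nonneg (by linarith)]
    exact ⟨ha, hb⟩

lemma spaceY_abs_fst {r : ℝ × ℝ} (hr : r ∈ spaceY) : |r.1| ≤ π / 2 := by
  have hpi : (3 : ℝ) < π := pi_gt_three
  rcases hr with hr | hr
  · simp only [setD, Set.mem_setOf_eq] at hr
    have := abs_nonneg r.2
    linarith
  · exact (lineLY_props hr).1.2

lemma spaceY_abs_snd {r : ℝ × ℝ} (hr : r ∈ spaceY) : |r.2| ≤ aY r.1 := by
  rcases hr with hr | hr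
  · simp only [setD, Set.mem_setOf_eq] at hr
    exact le_trans (by linarith) (le_max_right 0 ((1 / 4 - |r.1|) / 9))
  · rw [(lineLY_props hr).2, abs_zero]
    exact aY_nonneg _

lemma mem_setD_of_lt {p q : ℝ × ℝ} (hp : p ∈ spaceY) (hq : q ∈ spaceY)
    (h : |q.1 - p.1| < |q.2 - p.2|) : p ∈ setD := by
  rcases hp with hp | hp
  · exact hp
  exfalso
  obtain ⟨⟨hpx, -⟩, hp2⟩ := lineLY_props hp
  rcases hq with hq | hq
  · simp only [setD, Set.mem_setOf_eq] at hq
    have h1 : |p.1| - |q.1| ≤ |q.1 - p.1| := by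
      rw [abs_sub_comm]; exact abs_sub_abs_le_abs_sub _ _
    rw [hp2, sub_zero] at h
    nlinarith [abs_nonneg q.2]
  · rw [hp2, (lineLY_props hq).2, sub_zero, abs_zero] at h
    exact absurd h (not_lt.mpr (abs_nonneg _))

/-- Convexity of `D`: the straight segment between two points of `D` stays well inside the band. -/
lemma seg_mem_D {p q : ℝ × ℝ} (hp : p ∈ setD) (hq : q ∈ setD) {u : ℝ}
    (hu0 : 0 ≤ u) (hu1 : u ≤ 1) :
    |p.2 + u * (q.2 - p.2)| ≤ (1 / 4 - |p.1 + u * (q.1 - p.1)|) / 9 := by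
  simp only [setD, Set.mem_setOf_eq] at hp hq
  have e1 : p.1 + u * (q.1 - p.1) = (1 - u) * p.1 + u * q.1 := by ring
  have e2 : p.2 + u * (q.2 - p.2) = (1 - u) * p.2 + u * q.2 := by ring
  rw [e1, e2]
  have hA : |(1 - u) * p.2 + u * q.2| ≤ (1 - u) * |p.2| + u * |q.2| := by
    calc |(1 - u) * p.2 + u * q.2| ≤ |(1 - u) * p.2| + |u * q.2| := abs_add_le _ _
      _ = (1 - u) * |p.2| + u * |q.2| := by
          rw [abs_mul, abs_mul, abs_of_nonneg (by linarith), abs_of_nonneg hu0]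
  have hB : |(1 - u) * p.1 + u * q.1| ≤ (1 - u) * |p.1| + u * |q.1| := by
    calc |(1 - u) * p.1 + u * q.1| ≤ |(1 - u) * p.1| + |u * q.1| := abs_add_le _ _
      _ = (1 - u) * |p.1| + u * |q.1| := by
          rw [abs_mul, abs_mul, abs_of_nonneg (by linarith), abs_of_nonneg hu0]
  nlinarith [mul_le_mul_of_nonneg_left hp (by linarith : (0:ℝ) ≤ 1 - u),
    mul_le_mul_of_nonneg_left hq hu0]

theorem spaceY_compact_and_geodesic :
    IsCompact spaceY ∧
      ∀ p ∈ spaceY, ∀ q ∈ spaceY,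
        ∃ γ : ℝ → ℝ × ℝ, (∀ t ∈ Set.Icc (0 : ℝ) 1, γ t ∈ spaceY) ∧
          γ 0 = p ∧ γ 1 = q ∧
          ∀ s ∈ Set.Icc (0 : ℝ) 1, ∀ t ∈ Set.Icc (0 : ℝ) 1,
            dist (γ s) (γ t) = |s - t| * dist p q := by
  have hpi : (3 : ℝ) < π := pi_gt_three
  constructor
  · -- compactness
    have hclosed : IsClosed spaceY := by
      apply IsClosed.union
      · exact isClosed_le (by fun_prop) (by fun_prop)
      · exact ((isClosed_Icc.union isClosed_Icc).prod isClosed_singleton)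
    have hsub : spaceY ⊆ (Icc (-(π / 2)) (π / 2)) ×ˢ (Icc (-1 : ℝ) 1) := by
      intro r hr
      have h1 := spaceY_abs_fst hr
      have h2 := spaceY_abs_snd hr
      have h3 : aY r.1 ≤ 1 := by
        apply max_le (by norm_num)
        have := abs_nonneg r.1
        linarith
      rw [abs_le] at h1
      constructor
      · exact ⟨h1.1, h1.2⟩
      · rw [Set.mem_Icc]
        rw [abs_le] at h2
        have h4 := aY_nonneg r.1
        constructor <;> linarith
    exact IsCompact.of_isClosed_subset
      ((isCompact_Icc).prod (isCompact_Icc)) hclosed hsub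
  · intro p hp q hq
    refine ⟨fun t => (p.1 + t * (q.1 - p.1),
      max (-(aY (p.1 + t * (q.1 - p.1))))
        (min (p.2 + t * (q.2 - p.2)) (aY (p.1 + t * (q.1 - p.1))))), ?_, ?_, ?_, ?_⟩
    · -- membership
      rintro t ⟨ht0, ht1⟩
      dsimp only
      have hxp := spaceY_abs_fst hp
      have hxq := spaceY_abs_fst hq
      set x := p.1 + t * (q.1 - p.1) with hxdef
      have hxt : |x| ≤ π / 2 := by
        have e1 : x = (1 - t) * p.1 + t * q.1 := by rw [hxdef]; ring
        rw [e1]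
        calc |(1 - t) * p.1 + t * q.1| ≤ |(1 - t) * p.1| + |t * q.1| := abs_add_le _ _
          _ = (1 - t) * |p.1| + t * |q.1| := by
              rw [abs_mul, abs_mul, abs_of_nonneg (by linarith), abs_of_nonneg ht0]
          _ ≤ π / 2 := by nlinarith
      have hya : |max (-(aY x)) (min (p.2 + t * (q.2 - p.2)) (aY x))| ≤ aY x :=
        clamp_abs_le (aY_nonneg x)
      by_cases hc : |x| ≤ 1 / 4
      · left
        have ha : aY x = (1 / 4 - |x|) / 9 := max_eq_right (by linarith)
        simp only [setD, Set.mem_setOf_eq]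
        linarith [hya, ha.le, ha.ge]
      · right
        push_neg at hc
        have ha0 : aY x = 0 := max_eq_left (by linarith)
        have hy0 : max (-(aY x)) (min (p.2 + t * (q.2 - p.2)) (aY x)) = 0 :=
          abs_eq_zero.mp (le_antisymm (hya.trans ha0.le) (abs_nonneg _))
        refine ⟨?_, by simpa using hy0⟩
        rcases le_or_gt 0 x with hx0 | hx0
        · right
          rw [abs_of_nonneg hx0] at hc hxt
          exact ⟨hc.le, hxt⟩
        · left
          rw [abs_of_neg hx0] at hc hxt
          constructor <;> linarith
    · -- γ 0 = p
      have hcl := clamp_eq (spaceY_abs_snd hp)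
      simp only [zero_mul, add_zero, hcl, Prod.mk.eta]
    · -- γ 1 = q
      have e1 : p.1 + 1 * (q.1 - p.1) = q.1 := by ring
      have e2 : p.2 + 1 * (q.2 - p.2) = q.2 := by ring
      simp only [e1, e2, clamp_eq (spaceY_abs_snd hq), Prod.mk.eta]
    · -- geodesic equation
      rintro s ⟨hs0, hs1⟩ t ⟨ht0, ht1⟩
      dsimp only
      have hdist : dist p q = max |q.1 - p.1| |q.2 - p.2| := by
        rw [Prod.dist_eq, Real.dist_eq, Real.dist_eq, abs_sub_comm p.1 q.1,
          abs_sub_comm p.2 q.2]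
      rw [Prod.dist_eq, Real.dist_eq, Real.dist_eq]
      have hx : (p.1 + s * (q.1 - p.1)) - (p.1 + t * (q.1 - p.1)) = (s - t) * (q.1 - p.1) := by
        ring
      have hxe : |(p.1 + s * (q.1 - p.1)) - (p.1 + t * (q.1 - p.1))| = |s - t| * |q.1 - p.1| := by
        rw [hx, abs_mul]
      rcases le_or_gt |q.2 - p.2| |q.1 - p.1| with hcase | hcase
      · -- dominant x; y is Lipschitz
        have hd : max |q.1 - p.1| |q.2 - p.2| = |q.1 - p.1| := max_eq_left hcase
        rw [hdist, hd, hxe]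
        have hylip : |max (-(aY (p.1 + s * (q.1 - p.1))))
              (min (p.2 + s * (q.2 - p.2)) (aY (p.1 + s * (q.1 - p.1)))) -
            max (-(aY (p.1 + t * (q.1 - p.1))))
              (min (p.2 + t * (q.2 - p.2)) (aY (p.1 + t * (q.1 - p.1))))| ≤
            |s - t| * |q.1 - p.1| := by
          have h1 := abs_max_sub_max_le_max (-(aY (p.1 + s * (q.1 - p.1))))
            (min (p.2 + s * (q.2 - p.2)) (aY (p.1 + s * (q.1 - p.1))))
            (-(aY (p.1 + t * (q.1 - p.1))))
            (min (p.2 + t * (q.2 - p.2)) (aY (p.1 + t * (q.1 - p.1))))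
          have h2 := abs_min_sub_min_le_max (p.2 + s * (q.2 - p.2))
            (aY (p.1 + s * (q.1 - p.1))) (p.2 + t * (q.2 - p.2))
            (aY (p.1 + t * (q.1 - p.1)))
          have ha : |aY (p.1 + s * (q.1 - p.1)) - aY (p.1 + t * (q.1 - p.1))| ≤
              |s - t| * |q.1 - p.1| := by
            calc _ ≤ |(p.1 + s * (q.1 - p.1)) - (p.1 + t * (q.1 - p.1))| := aY_lip _ _
              _ = |s - t| * |q.1 - p.1| := hxe
          have haneg : |(-(aY (p.1 + s * (q.1 - p.1)))) - (-(aY (p.1 + t * (q.1 - p.1))))| =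
              |aY (p.1 + s * (q.1 - p.1)) - aY (p.1 + t * (q.1 - p.1))| := by
            rw [← abs_neg]; ring_nf
          have hl : |(p.2 + s * (q.2 - p.2)) - (p.2 + t * (q.2 - p.2))| ≤
              |s - t| * |q.1 - p.1| := by
            have : (p.2 + s * (q.2 - p.2)) - (p.2 + t * (q.2 - p.2)) = (s - t) * (q.2 - p.2) := by
              ring
            rw [this, abs_mul]
            exact mul_le_mul_of_nonneg_left hcase (abs_nonneg _)
          refine h1.trans (max_le ?_ (h2.trans (max_le hl ha)))
          rw [haneg]; exact ha
        exact max_eq_left hylip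
      · -- dominant y; clamp is a no-op and both points lie in D
        have hpD : p ∈ setD := mem_setD_of_lt hp hq hcase
        have hqD : q ∈ setD := by
          apply mem_setD_of_lt hq hp
          rwa [abs_sub_comm p.1 q.1, abs_sub_comm p.2 q.2]
        have hnoop : ∀ u : ℝ, 0 ≤ u → u ≤ 1 →
            max (-(aY (p.1 + u * (q.1 - p.1))))
              (min (p.2 + u * (q.2 - p.2)) (aY (p.1 + u * (q.1 - p.1)))) =
            p.2 + u * (q.2 - p.2) := by
          intro u hu0 hu1
          apply clamp_eq
          exact (seg_mem_D hpD hqD hu0 hu1).trans (le_max_right _ _)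
        rw [hnoop s hs0 hs1, hnoop t ht0 ht1]
        have hye : |(p.2 + s * (q.2 - p.2)) - (p.2 + t * (q.2 - p.2))| =
            |s - t| * |q.2 - p.2| := by
          have : (p.2 + s * (q.2 - p.2)) - (p.2 + t * (q.2 - p.2)) = (s - t) * (q.2 - p.2) := by
            ring
          rw [this, abs_mul]
        rw [hdist, max_eq_right hcase.le, hxe, hye]
        apply max_eq_right
        exact mul_le_mul_of_nonneg_left hcase.le (abs_nonneg _)

end
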